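/- Main theorem, one-step swap case (s=t=0): for nonnegative integers u, v, z, with (u^z) the partition with z parts equal to u and d = v+z-1, we have P^{v+z-1}_{(u^z)}(q) = P^{u+z-1}_{(v^z)}(q); equivalently, swapping u and v between the width of the rectangle and the module parameter leaves the SL(2)-character unchanged: s_{(u^z)}(1,q,...,q^{v+z-1})/q^{b} = s_{(v^z)}(1,q,...,q^{u+z-1})/q^{b'}. -/

import Mathlib

/-- The transpose (conjugate) partition: `λᵗ_j = #{i < N : λ_i > j}` (0-indexed),
for a partition `l` supported on indices `< N`. -/
def conj (l : ℕ → ℕ) (N : ℕ) : ℕ → ℕ := fun j => ((Finset.range N).filter fun i => j < l i).card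

/-- The boxes `(i, j)` (0-indexed) of the Young diagram of `l` (with `l` antitone
and supported on indices `< N`, so all columns are `< l 0`). -/
def boxes (l : ℕ → ℕ) (N : ℕ) : Finset (ℕ × ℕ) :=
  (Finset.range N ×ˢ Finset.range (l 0)).filter fun p => p.2 < l p.1

/-- The hook length of the (0-indexed) box `(i, j)`:
`(λ_i - 1 - j) + (λᵗ_j - 1 - i) + 1`. -/
def hook (l : ℕ → ℕ) (N i j : ℕ) : ℕ := (l i - 1 - j) + (conj l N j - 1 - i) + 1

/-- The `q`-analog `[a]_t = 1 + t + ⋯ + t^{a-1}`, evaluated at `t ∈ ℚ(q)`. -/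
noncomputable def qv (t : RatFunc ℚ) (a : ℕ) : RatFunc ℚ := ∑ i ∈ Finset.range a, t ^ i

/-- `|λ| = Σ λ_i`, the size of the partition. -/
def psize (l : ℕ → ℕ) (N : ℕ) : ℕ := ∑ i ∈ Finset.range N, l i

/-- `b(λ) = Σ_i (i-1)λ_i` (1-indexed), i.e. `Σ_i i·λ_i` with 0-indexing. -/
def bsum (l : ℕ → ℕ) (N : ℕ) : ℕ := ∑ i ∈ Finset.range N, i * l i

/-- The hook-content ratio `P^d_λ(t) = ∏_{u∈Y(λ)} [d+1+c(u)]_t / ∏_{u∈Y(λ)} [h(u)]_t`,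
where `c(i,j) = j - i` is the content (so `d+1+c(u) = d+1+j-i` in `ℕ`), evaluated
at `t ∈ ℚ(q)`. -/
noncomputable def Pt (l : ℕ → ℕ) (N d : ℕ) (t : RatFunc ℚ) : RatFunc ℚ :=
  (∏ p ∈ boxes l N, qv t (d + 1 + p.2 - p.1)) /
  (∏ p ∈ boxes l N, qv t (hook l N p.1 p.2))

/-- `P^d_λ(q)` as a rational function in `q`. -/
noncomputable def Pq (l : ℕ → ℕ) (N d : ℕ) : RatFunc ℚ := Pt l N d RatFunc.X

/-- The rectangular partition `(u^z)`: `z` parts equal to `u`. -/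
def rect (z u : ℕ) : ℕ → ℕ := fun i => if i < z then u else 0

noncomputable def qfac (n : ℕ) : RatFunc ℚ := ∏ k ∈ Finset.range n, qv RatFunc.X (k+1)

lemma qv_X_ne_zero {a : ℕ} (ha : 0 < a) : qv (RatFunc.X : RatFunc ℚ) a ≠ 0 := by
  have h1 : (qv RatFunc.X a : RatFunc ℚ)
      = algebraMap (Polynomial ℚ) (RatFunc ℚ) (∑ i ∈ Finset.range a, Polynomial.X ^ i) := by
    simp [qv, map_sum, map_pow, RatFunc.algebraMap_X]
  rw [h1, ne_eq, ← map_zero (algebraMap (Polynomial ℚ) (RatFunc ℚ)), (RatFunc.algebraMap_injective ℚ).eq_iff]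
  intro h
  have := congrArg (Polynomial.eval 1) h
  simp at this
  omega

lemma qfac_ne_zero (n : ℕ) : qfac n ≠ 0 :=
  Finset.prod_ne_zero_iff.2 fun k _ => qv_X_ne_zero (Nat.succ_pos k)

lemma qfac_add (a b : ℕ) :
    qfac (a + b) = qfac a * ∏ j ∈ Finset.range b, qv RatFunc.X (a + 1 + j) := by
  induction b with
  | zero => simp [qfac]
  | succ n ih =>
      rw [Finset.prod_range_succ, ← mul_assoc, ← ih, ← Nat.add_assoc]
      show qfac (a + n + 1) = _
      rw [qfac, Finset.prod_range_succ, ← qfac]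
      congr 2
      omega

lemma prod_qv (a b : ℕ) :
    ∏ j ∈ Finset.range b, qv RatFunc.X (a + 1 + j) = qfac (a + b) / qfac a := by
  rw [eq_div_iff (qfac_ne_zero a), mul_comm, ← qfac_add]

lemma boxes_rect (z u : ℕ) : boxes (rect z u) z = Finset.range z ×ˢ Finset.range u := by
  ext ⟨i, j⟩
  simp only [boxes, Finset.mem_filter, Finset.mem_product, Finset.mem_range]
  simp only [rect]
  split_ifs <;> omega

lemma conj_rect (z u j : ℕ) (hj : j < u) : conj (rect z u) z j = z := by
  unfold conj
  rw [Finset.filter_true_of_mem, Finset.card_range]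
  intro i hi
  simp [rect, Finset.mem_range.mp hi, hj]

lemma Pq_rect (u v z : ℕ) :
    Pq (rect z u) z (v + z - 1) =
      ((∏ m ∈ Finset.range z, qfac (u + v + m)) * ∏ m ∈ Finset.range z, qfac m) /
      ((∏ m ∈ Finset.range z, qfac (v + m)) * ∏ m ∈ Finset.range z, qfac (u + m)) := by
  rcases Nat.eq_zero_or_pos z with hz | hz
  · subst hz; simp [Pq, Pt, boxes_rect]
  rw [Pq, Pt, boxes_rect, Finset.prod_product, Finset.prod_product]
  have hnum : ∀ i ∈ Finset.range z,
      (∏ j ∈ Finset.range u, qv RatFunc.X (v + z - 1 + 1 + j - i))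
        = qfac (v + (z - 1 - i) + u) / qfac (v + (z - 1 - i)) := by
    intro i hi
    have hi' := Finset.mem_range.mp hi
    rw [← prod_qv]
    exact Finset.prod_congr rfl fun j _ => by congr 1; omega
  have hden : ∀ i ∈ Finset.range z,
      (∏ j ∈ Finset.range u, qv RatFunc.X (hook (rect z u) z i j))
        = qfac ((z - 1 - i) + u) / qfac (z - 1 - i) := by
    intro i hi
    have hi' := Finset.mem_range.mp hi
    rw [← prod_qv]
    rw [← Finset.prod_range_reflect (fun j => qv RatFunc.X (z - 1 - i + 1 + j)) u]
    refine Finset.prod_congr rfl fun j hj => ?_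
    have hj' := Finset.mem_range.mp hj
    unfold hook
    rw [conj_rect z u j hj']
    congr 1
    simp only [rect, if_pos hi']
    omega
  rw [Finset.prod_congr rfl hnum, Finset.prod_congr rfl hden]
  rw [Finset.prod_range_reflect (fun m => qfac (v + m + u) / qfac (v + m)) z,
    Finset.prod_range_reflect (fun m => qfac (m + u) / qfac m) z]
  simp only [Finset.prod_div_distrib]
  have e1 : ∀ m ∈ Finset.range z, qfac (v + m + u) = qfac (u + v + m) :=
    fun m _ => by congr 1; omega
  have e2 : ∀ m ∈ Finset.range z, qfac (m + u) = qfac (u + m) :=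
    fun m _ => by congr 1; omega
  rw [Finset.prod_congr rfl e1, Finset.prod_congr rfl e2]
  have h1 := Finset.prod_ne_zero_iff.2 fun m (_ : m ∈ Finset.range z) => qfac_ne_zero (v + m)
  have h2 := Finset.prod_ne_zero_iff.2 fun m (_ : m ∈ Finset.range z) => qfac_ne_zero (u + m)
  have h3 := Finset.prod_ne_zero_iff.2 fun m (_ : m ∈ Finset.range z) => qfac_ne_zero m
  field_simp

/-- One-step swap (s = t = 0 case of the main theorem): for all `u, v, z ≥ 0`,
`P^{v+z-1}_{(u^z)}(q) = P^{u+z-1}_{(v^z)}(q)`: swapping `u` and `v` between the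
rectangle width and the module parameter leaves the SL(2)-character unchanged. -/
theorem one_step_swap (u v z : ℕ) :
    Pq (rect z u) z (v + z - 1) = Pq (rect z v) z (u + z - 1) := by
  rw [Pq_rect, Pq_rect, add_comm v u]
  ring
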